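/- Let 𝓜 be a quantum channel (completely positive trace-preserving linear map) on M_d(ℂ), and suppose κ is a positive semidefinite matrix such that κ ≤ 𝓜(|ξ⟩⟨ξ|) for every unit vector ξ ∈ ℂ^d. Then for all density matrices ρ, σ: ‖𝓜(ρ) − 𝓜(σ)‖₁ ≤ (1 − Tr(κ))·‖ρ − σ‖₁, where ‖·‖₁ is the trace norm. -/

import Mathlib

open Matrix BigOperators Filter ComplexOrder

/-- The old Mathlib `Matrix.PosSemidef.sqrt` (removed since), with its original definition. -/
noncomputable def posSemidefSqrt {n : Type*} [Fintype n] [DecidableEq n]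
    {A : Matrix n n ℂ} (hA : A.PosSemidef) : Matrix n n ℂ :=
  hA.1.eigenvectorUnitary.1 * diagonal ((↑) ∘ (√·) ∘ hA.1.eigenvalues) *
  (star hA.1.eigenvectorUnitary : Matrix n n ℂ)

/-- Trace norm: `Tr √(aᴴa)`, the sum of singular values. -/
noncomputable def traceNorm {d : ℕ} (a : Matrix (Fin d) (Fin d) ℂ) : ℝ :=
  ((posSemidefSqrt (Matrix.posSemidef_conjTranspose_mul_self a)).trace).re

/-- Absolute value `√(bᴴb)` of a matrix. -/
noncomputable def matAbs {d : ℕ} (b : Matrix (Fin d) (Fin d) ℂ) : Matrix (Fin d) (Fin d) ℂ :=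
  posSemidefSqrt (Matrix.posSemidef_conjTranspose_mul_self b)

/-- Positive part `b₊ = (|b| + b)/2` (for `b` self-adjoint). -/
noncomputable def matPosPart {d : ℕ} (b : Matrix (Fin d) (Fin d) ℂ) : Matrix (Fin d) (Fin d) ℂ :=
  (1/2 : ℂ) • (matAbs b + b)

/-- Negative part `b₋ = (|b| - b)/2` (for `b` self-adjoint). -/
noncomputable def matNegPart {d : ℕ} (b : Matrix (Fin d) (Fin d) ℂ) : Matrix (Fin d) (Fin d) ℂ :=
  (1/2 : ℂ) • (matAbs b - b)

/-- Real part `(a + aᴴ)/2` of a matrix. -/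
noncomputable def reM {d : ℕ} (a : Matrix (Fin d) (Fin d) ℂ) : Matrix (Fin d) (Fin d) ℂ :=
  (1/2 : ℂ) • (a + aᴴ)

/-- Imaginary part `(a - aᴴ)/(2i)` of a matrix. -/
noncomputable def imM {d : ℕ} (a : Matrix (Fin d) (Fin d) ℂ) : Matrix (Fin d) (Fin d) ℂ :=
  (-(Complex.I)/2) • (a - aᴴ)

/-- A density matrix: positive semidefinite with trace 1. -/
def IsDensity {d : ℕ} (ρ : Matrix (Fin d) (Fin d) ℂ) : Prop :=
  ρ.PosSemidef ∧ ρ.trace = 1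

/-- Trace preservation for a linear map on matrices. -/
def IsTracePreserving {d : ℕ}
    (𝓜 : Matrix (Fin d) (Fin d) ℂ →ₗ[ℂ] Matrix (Fin d) (Fin d) ℂ) : Prop :=
  ∀ a, (𝓜 a).trace = a.trace

/-- Complete positivity: all the ampliations `𝓜 ⊗ id_k` preserve positive semidefiniteness. -/
def IsCompletelyPositive {d : ℕ}
    (𝓜 : Matrix (Fin d) (Fin d) ℂ →ₗ[ℂ] Matrix (Fin d) (Fin d) ℂ) : Prop :=
  ∀ (k : ℕ) (M : Matrix (Fin d × Fin k) (Fin d × Fin k) ℂ), M.PosSemidef →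
    (Matrix.of fun (p q : Fin d × Fin k) =>
      𝓜 (Matrix.of fun a b => M (a, p.2) (b, q.2)) p.1 q.1).PosSemidef

/-- The rank-one projection `|ξ⟩⟨ξ|`. -/
noncomputable def proj {d : ℕ} (ξ : Fin d → ℂ) : Matrix (Fin d) (Fin d) ℂ :=
  Matrix.vecMulVec ξ (star ξ)

/-- The TV-norm `Tr (Re a)₊ + Tr (Re a)₋ + Tr (Im a)₊ + Tr (Im a)₋`. -/
noncomputable def tvNorm {d : ℕ} (a : Matrix (Fin d) (Fin d) ℂ) : ℝ :=
  ((matPosPart (reM a)).trace).re + ((matNegPart (reM a)).trace).re +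
    ((matPosPart (imM a)).trace).re + ((matNegPart (imM a)).trace).re

/-- The completely depolarizing channel `Ω(a) = (Tr a / d) • I`. -/
noncomputable def depol (d : ℕ) : Matrix (Fin d) (Fin d) ℂ →ₗ[ℂ] Matrix (Fin d) (Fin d) ℂ where
  toFun a := (a.trace / d) • (1 : Matrix (Fin d) (Fin d) ℂ)
  map_add' a b := by simp [Matrix.trace_add, add_div, add_smul]
  map_smul' c a := by simp [Matrix.trace_smul, smul_smul, mul_div_assoc]


/-! ### Auxiliary lemmas -/

open scoped MatrixOrder in
lemma psdSqrt_eq_cfc {n : Type*} [Fintype n] [DecidableEq n] {A : Matrix n n ℂ}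
    (hA : A.PosSemidef) : posSemidefSqrt hA = CFC.sqrt A := by
  rw [CFC.sqrt_eq_cfc, cfc_nnreal_eq_real _ A, hA.1.cfc_eq]
  simp only [IsHermitian.cfc, posSemidefSqrt, Real.coe_sqrt, Real.coe_toNNReal',
    Unitary.conjStarAlgAut_apply]
  congr 3
  funext i
  simp [max_eq_left (hA.eigenvalues_nonneg i)]

open scoped MatrixOrder in
lemma psdSqrt_psd {n : Type*} [Fintype n] [DecidableEq n] {A : Matrix n n ℂ}
    (hA : A.PosSemidef) : (posSemidefSqrt hA).PosSemidef := by
  rw [psdSqrt_eq_cfc]; exact Matrix.nonneg_iff_posSemidef.mp (CFC.sqrt_nonneg A)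

open scoped MatrixOrder in
lemma psdSqrt_mul_self {n : Type*} [Fintype n] [DecidableEq n] {A : Matrix n n ℂ}
    (hA : A.PosSemidef) : posSemidefSqrt hA * posSemidefSqrt hA = A := by
  rw [psdSqrt_eq_cfc]; exact CFC.sqrt_mul_sqrt_self A (Matrix.nonneg_iff_posSemidef.mpr hA)

lemma psdSqrt_sq {n : Type*} [Fintype n] [DecidableEq n] {A : Matrix n n ℂ}
    (hA : A.PosSemidef) : posSemidefSqrt hA ^ 2 = A := by
  rw [sq, psdSqrt_mul_self]

open scoped MatrixOrder in
lemma psdSqrt_eq_of_sq_eq {n : Type*} [Fintype n] [DecidableEq n] {A B : Matrix n n ℂ}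
    (hB : B.PosSemidef) (hA : A.PosSemidef) (h : B ^ 2 = A) : B = posSemidefSqrt hA := by
  rw [psdSqrt_eq_cfc]
  exact (CFC.sqrt_unique (by rw [← sq]; exact h) (Matrix.nonneg_iff_posSemidef.mpr hB)).symm

section aux

variable {d : ℕ}

/-- Conjugation of a real diagonal matrix by `U`. -/
noncomputable def cdiag (U : Matrix (Fin d) (Fin d) ℂ) (f : Fin d → ℝ) :
    Matrix (Fin d) (Fin d) ℂ :=
  U * Matrix.diagonal (fun i => (f i : ℂ)) * star U

lemma cdiag_herm (U : Matrix (Fin d) (Fin d) ℂ) (f : Fin d → ℝ) :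
    (cdiag U f).IsHermitian := by
  unfold cdiag
  rw [Matrix.star_eq_conjTranspose]
  refine Matrix.isHermitian_mul_mul_conjTranspose U ?_
  refine Matrix.isHermitian_diagonal_of_self_adjoint _ ?_
  funext i
  exact Complex.conj_ofReal _

lemma cdiag_psd {U : Matrix (Fin d) (Fin d) ℂ} {f : Fin d → ℝ}
    (hf : ∀ i, 0 ≤ f i) : (cdiag U f).PosSemidef := by
  unfold cdiag
  rw [Matrix.star_eq_conjTranspose]
  refine Matrix.PosSemidef.mul_mul_conjTranspose_same ?_ U
  refine Matrix.PosSemidef.diagonal fun i => ?_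
  exact Complex.zero_le_real.mpr (hf i)

lemma cdiag_mul {U : Matrix (Fin d) (Fin d) ℂ} (hU : star U * U = 1)
    (f g : Fin d → ℝ) : cdiag U f * cdiag U g = cdiag U (fun i => f i * g i) := by
  unfold cdiag
  have : U * Matrix.diagonal (fun i => (f i : ℂ)) * star U *
      (U * Matrix.diagonal (fun i => (g i : ℂ)) * star U)
      = U * Matrix.diagonal (fun i => (f i : ℂ)) * (star U * U) *
        Matrix.diagonal (fun i => (g i : ℂ)) * star U := by
    noncomm_ring
  rw [this, hU, mul_one, mul_assoc U, Matrix.diagonal_mul_diagonal]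
  rw [show (fun i => ((f i : ℝ) : ℂ) * ((g i : ℝ) : ℂ))
      = (fun i => (((f i * g i : ℝ)) : ℂ)) from by funext i; push_cast; ring]

lemma cdiag_trace {U : Matrix (Fin d) (Fin d) ℂ} (hU : star U * U = 1)
    (f : Fin d → ℝ) : (cdiag U f).trace = ((∑ i, f i : ℝ) : ℂ) := by
  unfold cdiag
  rw [Matrix.trace_mul_cycle, hU, one_mul, Matrix.trace_diagonal]
  norm_cast

lemma cdiag_add (U : Matrix (Fin d) (Fin d) ℂ) (f g : Fin d → ℝ) :
    cdiag U f + cdiag U g = cdiag U (f + g) := by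
  unfold cdiag
  rw [← Matrix.add_mul, ← Matrix.mul_add, Matrix.diagonal_add]
  norm_cast

lemma cdiag_sub (U : Matrix (Fin d) (Fin d) ℂ) (f g : Fin d → ℝ) :
    cdiag U f - cdiag U g = cdiag U (f - g) := by
  unfold cdiag
  rw [← Matrix.sub_mul, ← Matrix.mul_sub, Matrix.diagonal_sub]
  norm_cast

lemma cdiag_smul (U : Matrix (Fin d) (Fin d) ℂ) (r : ℝ) (f : Fin d → ℝ) :
    (r : ℂ) • cdiag U f = cdiag U (r • f) := by
  unfold cdiag
  have hd : Matrix.diagonal (fun i => (((r • f) i : ℝ) : ℂ))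
      = (r : ℂ) • Matrix.diagonal (fun i => ((f i : ℝ) : ℂ)) := by
    ext i j
    by_cases h : i = j <;> simp [Matrix.diagonal_apply, h] <;> push_cast <;> ring
  rw [hd, mul_smul_comm, smul_mul_assoc]

lemma cdiag_one {U : Matrix (Fin d) (Fin d) ℂ} (hU : U * star U = 1) :
    cdiag U (fun _ => 1) = 1 := by
  unfold cdiag
  have : Matrix.diagonal (fun _ : Fin d => ((1 : ℝ) : ℂ)) = 1 := by
    simp
  rw [this, mul_one, hU]

/-- Spectral theorem in `cdiag` form. -/
lemma herm_spectral {X : Matrix (Fin d) (Fin d) ℂ} (hX : X.IsHermitian) :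
    X = cdiag (hX.eigenvectorUnitary : Matrix (Fin d) (Fin d) ℂ) hX.eigenvalues := by
  exact hX.spectral_theorem

lemma eigvec_unitary_left {X : Matrix (Fin d) (Fin d) ℂ} (hX : X.IsHermitian) :
    star (hX.eigenvectorUnitary : Matrix (Fin d) (Fin d) ℂ) *
      (hX.eigenvectorUnitary : Matrix (Fin d) (Fin d) ℂ) = 1 :=
  Unitary.star_mul_self_of_mem hX.eigenvectorUnitary.2

lemma eigvec_unitary_right {X : Matrix (Fin d) (Fin d) ℂ} (hX : X.IsHermitian) :
    (hX.eigenvectorUnitary : Matrix (Fin d) (Fin d) ℂ) *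
      star (hX.eigenvectorUnitary : Matrix (Fin d) (Fin d) ℂ) = 1 :=
  Unitary.mul_star_self_of_mem hX.eigenvectorUnitary.2

lemma matAbs_eq {X : Matrix (Fin d) (Fin d) ℂ} (hX : X.IsHermitian) :
    matAbs X = cdiag (hX.eigenvectorUnitary : Matrix (Fin d) (Fin d) ℂ)
      (fun i => |hX.eigenvalues i|) := by
  have hXX : X * X = cdiag (hX.eigenvectorUnitary : Matrix (Fin d) (Fin d) ℂ)
      (fun i => hX.eigenvalues i * hX.eigenvalues i) := by
    conv_lhs => rw [herm_spectral hX]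
    rw [cdiag_mul (eigvec_unitary_left hX)]
  unfold matAbs
  symm
  apply psdSqrt_eq_of_sq_eq (cdiag_psd fun i => abs_nonneg _)
  rw [pow_two, cdiag_mul (eigvec_unitary_left hX)]
  have h1 : (fun i => |hX.eigenvalues i| * |hX.eigenvalues i|)
      = fun i => hX.eigenvalues i * hX.eigenvalues i := by
    funext i; exact abs_mul_abs_self _
  rw [h1, hX.eq, hXX]

lemma matPosPart_eq {X : Matrix (Fin d) (Fin d) ℂ} (hX : X.IsHermitian) :
    matPosPart X = cdiag (hX.eigenvectorUnitary : Matrix (Fin d) (Fin d) ℂ)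
      (fun i => max (hX.eigenvalues i) 0) := by
  symm
  have h1 : (fun i => max (hX.eigenvalues i) 0)
      = ((1:ℝ)/2) • ((fun i => |hX.eigenvalues i|) + hX.eigenvalues) := by
    funext i
    simp only [Pi.smul_apply, Pi.add_apply, smul_eq_mul]
    rcases le_total 0 (hX.eigenvalues i) with h | h
    · rw [abs_of_nonneg h, max_eq_left h]; ring
    · rw [abs_of_nonpos h, max_eq_right h]; ring
  rw [h1, ← cdiag_smul, ← cdiag_add, ← matAbs_eq hX, ← herm_spectral hX]
  unfold matPosPart
  push_cast
  norm_num

lemma matPosPart_psd {X : Matrix (Fin d) (Fin d) ℂ} (hX : X.IsHermitian) :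
    (matPosPart X).PosSemidef := by
  rw [matPosPart_eq hX]
  exact cdiag_psd fun i => le_max_right _ _

lemma matAbs_neg (X : Matrix (Fin d) (Fin d) ℂ) : matAbs (-X) = matAbs X := by
  unfold matAbs
  have h : (-X)ᴴ * (-X) = Xᴴ * X := by simp
  exact psdSqrt_eq_of_sq_eq
    (psdSqrt_psd (Matrix.posSemidef_conjTranspose_mul_self (-X)))
    (Matrix.posSemidef_conjTranspose_mul_self X)
    (by rw [psdSqrt_sq (Matrix.posSemidef_conjTranspose_mul_self (-X)), h])

lemma matNegPart_eq_posPart_neg (X : Matrix (Fin d) (Fin d) ℂ) :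
    matNegPart X = matPosPart (-X) := by
  unfold matNegPart matPosPart
  rw [matAbs_neg, sub_eq_add_neg]

lemma matNegPart_psd {X : Matrix (Fin d) (Fin d) ℂ} (hX : X.IsHermitian) :
    (matNegPart X).PosSemidef := by
  rw [matNegPart_eq_posPart_neg]
  exact matPosPart_psd hX.neg

lemma myPosPart_sub_negPart (X : Matrix (Fin d) (Fin d) ℂ) :
    matPosPart X - matNegPart X = X := by
  unfold matPosPart matNegPart
  rw [← smul_sub]
  have : matAbs X + X - (matAbs X - X) = (2:ℂ) • X := by
    rw [two_smul]; abel
  rw [this, smul_smul]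
  norm_num

lemma myPosPart_add_negPart (X : Matrix (Fin d) (Fin d) ℂ) :
    matPosPart X + matNegPart X = matAbs X := by
  unfold matPosPart matNegPart
  rw [← smul_add]
  have : matAbs X + X + (matAbs X - X) = (2:ℂ) • matAbs X := by
    rw [two_smul]; abel
  rw [this, smul_smul]
  norm_num

lemma herm_trace_real {X : Matrix (Fin d) (Fin d) ℂ} (hX : X.IsHermitian) :
    ((X.trace.re : ℝ) : ℂ) = X.trace := by
  have h := Matrix.trace_conjTranspose X
  rw [hX.eq] at h
  exact Complex.conj_eq_iff_re.mp h.symm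

lemma psd_trace_re_nonneg {X : Matrix (Fin d) (Fin d) ℂ} (hX : X.PosSemidef) :
    0 ≤ X.trace.re := by
  have h : ∀ i, 0 ≤ X i i := by
    intro i
    have := hX.dotProduct_mulVec_nonneg (Pi.single i 1)
    simpa [dotProduct, Matrix.mulVec, dotProduct, Pi.single_apply,
      Finset.sum_ite_eq', Finset.sum_ite_eq] using this
  have : X.trace.re = ∑ i, (X i i).re := by
    unfold Matrix.trace Matrix.diag
    rw [Complex.re_sum]
  rw [this]
  exact Finset.sum_nonneg fun i _ => (Complex.le_def.mp (h i)).1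

lemma trace_mul_psd_re_nonneg {A B : Matrix (Fin d) (Fin d) ℂ}
    (hA : A.PosSemidef) (hB : B.PosSemidef) : 0 ≤ ((A * B).trace).re := by
  have h1 : A * B = posSemidefSqrt hA * (posSemidefSqrt hA * B) := by
    rw [← mul_assoc, psdSqrt_mul_self hA]
  rw [h1, Matrix.trace_mul_comm]
  have hpsd : (posSemidefSqrt hA * B * posSemidefSqrt hA).PosSemidef := by
    have := hB.mul_mul_conjTranspose_same (posSemidefSqrt hA)
    rwa [(psdSqrt_psd hA).1.eq] at this
  exact psd_trace_re_nonneg hpsd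

lemma psd_smul_real {r : ℝ} (hr : 0 ≤ r) {A : Matrix (Fin d) (Fin d) ℂ}
    (hA : A.PosSemidef) : ((r : ℂ) • A).PosSemidef := by
  refine Matrix.PosSemidef.of_dotProduct_mulVec_nonneg ?_ ?_
  · have h : ((r : ℂ) • A)ᴴ = (r : ℂ) • Aᴴ := by
      rw [Matrix.conjTranspose_smul]
      congr 1
      exact Complex.conj_ofReal r
    unfold Matrix.IsHermitian
    rw [h, hA.1.eq]
  · intro x
    rw [Matrix.smul_mulVec, dotProduct_smul, smul_eq_mul]
    exact mul_nonneg (Complex.zero_le_real.mpr hr) (hA.dotProduct_mulVec_nonneg x)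

lemma psd_sum {ι : Type*} (s : Finset ι) (f : ι → Matrix (Fin d) (Fin d) ℂ)
    (h : ∀ i ∈ s, (f i).PosSemidef) : (∑ i ∈ s, f i).PosSemidef :=
  Finset.sum_induction f _ (fun _ _ ha hb => ha.add hb) .zero h

/-- Key trace inequality: if `X = A - B` with `A, B` psd then `Tr X₊ ≤ Tr A`. -/
lemma posPart_trace_le {X A B : Matrix (Fin d) (Fin d) ℂ}
    (hA : A.PosSemidef) (hB : B.PosSemidef) (hX : X = A - B) :
    ((matPosPart X).trace).re ≤ (A.trace).re := by
  have hXh : X.IsHermitian := hX ▸ hA.1.sub hB.1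
  obtain ⟨U, lam, hU1, hU2, hspec, hpos⟩ :
      ∃ (U : Matrix (Fin d) (Fin d) ℂ) (lam : Fin d → ℝ),
        star U * U = 1 ∧ U * star U = 1 ∧ X = cdiag U lam ∧
          matPosPart X = cdiag U (fun i => max (lam i) 0) :=
    ⟨_, _, eigvec_unitary_left hXh, eigvec_unitary_right hXh, herm_spectral hXh,
      matPosPart_eq hXh⟩
  set Q := cdiag U (fun i => if 0 < lam i then 1 else 0) with hQdef
  have hQ : Q.PosSemidef := cdiag_psd fun i => by split <;> norm_num
  have h1mQ : (1 - Q).PosSemidef := by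
    rw [← cdiag_one hU2, hQdef, cdiag_sub]
    exact cdiag_psd fun i => by simp only [Pi.sub_apply]; split <;> norm_num
  have hQX : Q * X = matPosPart X := by
    conv_lhs => rw [hspec]
    rw [hQdef, cdiag_mul hU1, hpos]
    have harg : (fun i => (if 0 < lam i then (1:ℝ) else 0) * lam i)
        = fun i => max (lam i) 0 := by
      funext i
      rcases lt_or_ge 0 (lam i) with h | h
      · rw [if_pos h, one_mul, max_eq_left h.le]
      · rw [if_neg (not_lt.mpr h), zero_mul, max_eq_right h]
    rw [harg]
  have key : (matPosPart X).trace.re = (Q * A).trace.re - (Q * B).trace.re := by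
    rw [← hQX, hX, mul_sub, Matrix.trace_sub, Complex.sub_re]
  have h2 : (Q * A).trace.re ≤ A.trace.re := by
    have h3 : A - Q * A = (1 - Q) * A := by rw [Matrix.sub_mul, one_mul]
    have h4 := trace_mul_psd_re_nonneg h1mQ hA
    rw [← h3, Matrix.trace_sub, Complex.sub_re] at h4
    linarith
  have h5 := trace_mul_psd_re_nonneg hQ hB
  linarith

/-- Spectral decomposition of a psd matrix as a combination of projections. -/
lemma psd_sum_proj {m : Matrix (Fin d) (Fin d) ℂ} (hm : m.PosSemidef) :
    m = ∑ i, (hm.1.eigenvalues i : ℂ) •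
      proj (fun j => (hm.1.eigenvectorUnitary : Matrix (Fin d) (Fin d) ℂ) j i) := by
  conv_lhs => rw [herm_spectral hm.1]
  unfold cdiag proj
  ext p q
  rw [Matrix.sum_apply]
  simp only [Matrix.mul_apply, Matrix.diagonal_apply, Matrix.smul_apply,
    Matrix.vecMulVec_apply, Pi.star_apply, smul_eq_mul]
  refine Finset.sum_congr rfl fun i _ => ?_
  rw [Finset.sum_eq_single i (fun b _ hb => by rw [if_neg hb, mul_zero]) (by simp)]
  rw [if_pos rfl, Matrix.star_apply]
  ring

lemma unitary_col_unit {U : Matrix (Fin d) (Fin d) ℂ} (hU : star U * U = 1) (i : Fin d) :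
    star (fun j => U j i) ⬝ᵥ (fun j => U j i) = 1 := by
  have h := congrArg (fun M => M i i) hU
  simp only [Matrix.mul_apply, Matrix.one_apply_eq] at h
  rw [← h]
  rfl

/-- The domination hypothesis extends from projections to all psd matrices. -/
lemma dom_psd {𝓜 : Matrix (Fin d) (Fin d) ℂ →ₗ[ℂ] Matrix (Fin d) (Fin d) ℂ}
    {κ : Matrix (Fin d) (Fin d) ℂ}
    (hdom : ∀ ξ : Fin d → ℂ, star ξ ⬝ᵥ ξ = 1 → (𝓜 (proj ξ) - κ).PosSemidef)
    {m : Matrix (Fin d) (Fin d) ℂ} (hm : m.PosSemidef) :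
    (𝓜 m - m.trace • κ).PosSemidef := by
  have htr : m.trace = ∑ i, ((hm.1.eigenvalues i : ℝ) : ℂ) := by
    conv_lhs => rw [herm_spectral hm.1]
    rw [cdiag_trace (eigvec_unitary_left hm.1)]
    push_cast
    rfl
  have hmsum := psd_sum_proj hm
  have h𝓜 : 𝓜 m = ∑ i, (hm.1.eigenvalues i : ℂ) •
      𝓜 (proj (fun j => (hm.1.eigenvectorUnitary : Matrix (Fin d) (Fin d) ℂ) j i)) := by
    conv_lhs => rw [hmsum]
    rw [map_sum]
    exact Finset.sum_congr rfl fun i _ => 𝓜.map_smul _ _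
  have hκ : m.trace • κ = ∑ i, (hm.1.eigenvalues i : ℂ) • κ := by
    rw [htr, Finset.sum_smul]
  rw [h𝓜, hκ, ← Finset.sum_sub_distrib]
  refine psd_sum _ _ fun i _ => ?_
  rw [← smul_sub]
  exact psd_smul_real (hm.eigenvalues_nonneg i)
    (hdom _ (unitary_col_unit (eigvec_unitary_left hm.1) i))

lemma traceNorm_eq_abs (X : Matrix (Fin d) (Fin d) ℂ) :
    traceNorm X = ((matAbs X).trace).re := rfl

end aux

/-- the quantum Markov–Dobrushin inequality. -/
theorem stmt3 {d : ℕ} (𝓜 : Matrix (Fin d) (Fin d) ℂ →ₗ[ℂ] Matrix (Fin d) (Fin d) ℂ)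
    (hCP : IsCompletelyPositive 𝓜) (hTP : IsTracePreserving 𝓜)
    (κ : Matrix (Fin d) (Fin d) ℂ) (hκ : κ.PosSemidef)
    (hdom : ∀ ξ : Fin d → ℂ, star ξ ⬝ᵥ ξ = 1 → (𝓜 (proj ξ) - κ).PosSemidef)
    (ρ σ : Matrix (Fin d) (Fin d) ℂ) (hρ : IsDensity ρ) (hσ : IsDensity σ) :
    traceNorm (𝓜 ρ - 𝓜 σ) ≤ (1 - (κ.trace).re) * traceNorm (ρ - σ) := by
  set δ := ρ - σ with hδdef
  have hδh : δ.IsHermitian := hρ.1.1.sub hσ.1.1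
  set P := matPosPart δ with hPdef
  set N := matNegPart δ with hNdef
  have hP : P.PosSemidef := matPosPart_psd hδh
  have hN : N.PosSemidef := matNegPart_psd hδh
  have hPN : P - N = δ := myPosPart_sub_negPart δ
  set t := (P.trace).re with htdef
  have hδtr : δ.trace = 0 := by
    rw [hδdef, Matrix.trace_sub, hρ.2, hσ.2, sub_self]
  have htN : (N.trace).re = t := by
    have h := congrArg Matrix.trace hPN
    rw [Matrix.trace_sub, hδtr] at h
    have h2 := congrArg Complex.re h
    rw [Complex.sub_re, Complex.zero_re] at h2
    rw [htdef]
    linarith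
  have htP_C : P.trace = (t : ℂ) := (herm_trace_real hP.1).symm
  have htN_C : N.trace = (t : ℂ) := by
    rw [← htN]; exact (herm_trace_real hN.1).symm
  -- trace norm of δ
  have hδnorm : traceNorm δ = 2 * t := by
    rw [traceNorm_eq_abs, ← myPosPart_add_negPart δ, Matrix.trace_add, Complex.add_re,
      ← hPdef, ← hNdef, htN, ← htdef]
    ring
  -- the two psd matrices A and B
  set A := 𝓜 P - (t : ℂ) • κ with hAdef
  set B := 𝓜 N - (t : ℂ) • κ with hBdef
  have hApsd : A.PosSemidef := by
    have := dom_psd hdom hP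
    rwa [htP_C] at this
  have hBpsd : B.PosSemidef := by
    have := dom_psd hdom hN
    rwa [htN_C] at this
  have hXAB : 𝓜 ρ - 𝓜 σ = A - B := by
    rw [hAdef, hBdef, ← map_sub, ← hδdef]
    conv_lhs => rw [← hPN]
    rw [map_sub]
    abel
  have hXBA : -(𝓜 ρ - 𝓜 σ) = B - A := by rw [hXAB]; abel
  -- traces of A and B
  have hAtr : (A.trace).re = t - t * (κ.trace).re := by
    rw [hAdef, Matrix.trace_sub, Matrix.trace_smul, hTP, htP_C, Complex.sub_re]
    simp [Complex.mul_re]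
  have hBtr : (B.trace).re = t - t * (κ.trace).re := by
    rw [hBdef, Matrix.trace_sub, Matrix.trace_smul, hTP, htN_C, Complex.sub_re]
    simp [Complex.mul_re]
  -- trace norm bound
  have hposle : ((matPosPart (𝓜 ρ - 𝓜 σ)).trace).re ≤ (A.trace).re :=
    posPart_trace_le hApsd hBpsd hXAB
  have hnegle : ((matNegPart (𝓜 ρ - 𝓜 σ)).trace).re ≤ (B.trace).re := by
    rw [matNegPart_eq_posPart_neg]
    exact posPart_trace_le hBpsd hApsd hXBA
  have hnorm : traceNorm (𝓜 ρ - 𝓜 σ)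
      = ((matPosPart (𝓜 ρ - 𝓜 σ)).trace).re + ((matNegPart (𝓜 ρ - 𝓜 σ)).trace).re := by
    rw [traceNorm_eq_abs, ← myPosPart_add_negPart, Matrix.trace_add, Complex.add_re]
  rw [hnorm, hδnorm]
  have hineq := add_le_add hposle hnegle
  rw [hAtr, hBtr] at hineq
  linarith
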